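/- arXiv:1409.5202 — 2 statements merged into one kernel-verified Lean document; each statement's English description precedes it below -/
import Mathlib

section
/- The process r̄(k) = (r(k), s(k), σ(k), ⌊k+1−τ(k)⌋_T), k ≥ 0, is a time-homogeneous Markov chain on X̄ with transition matrix p̄: for every k ≥ 0, every χ₀, …, χ_k ∈ X̄ with ℙ(r̄(0)=χ₀, …, r̄(k)=χ_k) > 0, and every χ' ∈ X̄, one has ℙ(r̄(k+1)=χ' | r̄(k)=χ_k, r̄(k−1)=χ_{k−1}, …, r̄(0)=χ₀) = p̄_{χ_k, χ'}; in particular this conditional probability depends only on χ_k and χ' and not on k or on the earlier history. -/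
/-!
Every component of `r̄(k)` is a function of the history `(r(j), s(j))_{j ≤ k}`, and `r̄(k+1)` is
obtained from `r̄(k)` and the new pair `(r(k+1), s(k+1))` by a fixed update rule `rbarStep`.
Hence conditioning on `r̄(0), …, r̄(k)` is conditioning on a history event of the pair chain
`(r, s)`, and on that event `{r̄(k+1) = χ'}` is `{(r(k+1), s(k+1)) = (χ'.1, χ'.2.1)}` when the
update rule sends `χ_k` to `χ'`, and empty otherwise.

Since `r` and `s` are not assumed measurable, conditional probabilities are quotients of outer
measures. This is harmless because the history events are null-measurable, by induction on their
length: the Markov property makes the outer measures of the one-step refinements of a history event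
add up to its measure, and a finite cover of a null-measurable set of finite measure by subsets
whose outer measures add up to its measure consists of null-measurable sets.
-/

open MeasureTheory ProbabilityTheory

/-- `flT T k : Fin T` represents `⌊k⌋_T`, the unique element of `{1,…,T}` such that
`k − ⌊k⌋_T` is divisible by `T`; the element `d : Fin T` encodes the value `d.val + 1`. -/
def flT (T : ℕ) [NeZero T] (k : ℤ) : Fin T :=
  ⟨((k - 1) % (T : ℤ)).toNat, by
    have hT : (0:ℤ) < (T:ℤ) := by exact_mod_cast Nat.pos_of_ne_zero (NeZero.ne T)
    have h1 : 0 ≤ (k - 1) % (T:ℤ) := Int.emod_nonneg _ (ne_of_gt hT)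
    have h2 : (k - 1) % (T:ℤ) < (T:ℤ) := Int.emod_lt_of_pos _ hT
    omega⟩

/-- `τ(k)`: the most recent observation time `≤ k`, i.e. the largest `j ≤ k` with
`s j ∈ Λ`, and `τ₀` if no observation has occurred yet. -/
noncomputable def tauProc {M : ℕ} {Ω : Type*} (Λ : Set (Fin M)) (s : ℕ → Ω → Fin M)
    (τ0 : ℤ) (k : ℕ) (ω : Ω) : ℤ := by
  classical
  exact if ∃ j ≤ k, s j ω ∈ Λ then
    ((Nat.findGreatest (fun j => s j ω ∈ Λ) k : ℕ) : ℤ) else τ0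

/-- `σ(k) = r(τ(k))` for `k ≥ t₀` and `σ₀` before the first observation. -/
noncomputable def sigmaProc {N M : ℕ} {Ω : Type*} (Λ : Set (Fin M))
    (r : ℕ → Ω → Fin N) (s : ℕ → Ω → Fin M) (σ0 : Fin N) (k : ℕ) (ω : Ω) : Fin N := by
  classical
  exact if ∃ j ≤ k, s j ω ∈ Λ then r (Nat.findGreatest (fun j => s j ω ∈ Λ) k) ω else σ0

/-- The extended process `r̄(k) = (r(k), s(k), σ(k), ⌊k+1−τ(k)⌋_T)`. -/
noncomputable def rbar {N M : ℕ} (T : ℕ) [NeZero T] {Ω : Type*} (Λ : Set (Fin M))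
    (r : ℕ → Ω → Fin N) (s : ℕ → Ω → Fin M) (τ0 : ℤ) (σ0 : Fin N) (k : ℕ) (ω : Ω) :
    Fin N × Fin M × Fin N × Fin T :=
  (r k ω, s k ω, sigmaProc Λ r s σ0 k ω, flT T ((k : ℤ) + 1 - tauProc Λ s τ0 k ω))

/-- The transition matrix `p̄` on `X̄ = {1,…,N} × {1,…,M} × {1,…,N} × {1,…,T}`.
Recall that `δ : Fin T` encodes the value `δ.val + 1`, so `flT T 1 = 0` encodes the
value `1` and `δ + 1` (cyclic `Fin` addition) encodes `⌊δ + 1⌋_T`. -/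
noncomputable def pbar {N M T : ℕ} [NeZero T] (P : Matrix (Fin N) (Fin N) ℝ)
    (Q : Matrix (Fin M) (Fin M) ℝ) (Λ : Set (Fin M))
    (χ χ' : Fin N × Fin M × Fin N × Fin T) : ℝ := by
  classical
  exact
    if χ'.2.1 ∈ Λ then
      if χ'.1 = χ'.2.2.1 ∧ χ'.2.2.2 = flT T 1 then P χ.1 χ'.1 * Q χ.2.1 χ'.2.1 else 0
    else
      if χ'.2.2.1 = χ.2.2.1 ∧ χ'.2.2.2 = χ.2.2.2 + 1 then P χ.1 χ'.1 * Q χ.2.1 χ'.2.1 else 0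

/-- A row-stochastic matrix. -/
def RowStochastic {I : Type*} [Fintype I] (P : I → I → ℝ) : Prop :=
  (∀ i j, 0 ≤ P i j) ∧ ∀ i, ∑ j, P i j = 1

/-- The pair `(r, s)` is a time-homogeneous Markov chain with product transition
probabilities `P ⊗ Q`: conditional on any history of positive probability. -/
def IsPairMarkov {N M : ℕ} {Ω : Type*} [MeasurableSpace Ω] (μ : Measure Ω)
    (r : ℕ → Ω → Fin N) (s : ℕ → Ω → Fin M)
    (P : Matrix (Fin N) (Fin N) ℝ) (Q : Matrix (Fin M) (Fin M) ℝ) : Prop :=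
  ∀ (k : ℕ) (a : ℕ → Fin N) (b : ℕ → Fin M),
    μ {ω | ∀ j ≤ k, r j ω = a j ∧ s j ω = b j} ≠ 0 →
    ∀ (α' : Fin N) (β' : Fin M),
      ProbabilityTheory.cond μ {ω | ∀ j ≤ k, r j ω = a j ∧ s j ω = b j}
          {ω | r (k+1) ω = α' ∧ s (k+1) ω = β'}
        = ENNReal.ofReal (P (a k) α' * Q (b k) β')

/-- A time-homogeneous Markov chain on a (finite) state space `S` with transition
matrix `P`. -/
def IsMarkov {S : Type*} {Ω : Type*} [MeasurableSpace Ω] (μ : Measure Ω)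
    (X : ℕ → Ω → S) (P : S → S → ℝ) : Prop :=
  ∀ (k : ℕ) (c : ℕ → S),
    μ {ω | ∀ i ≤ k, X i ω = c i} ≠ 0 →
    ∀ j : S,
      ProbabilityTheory.cond μ {ω | ∀ i ≤ k, X i ω = c i} {ω | X (k+1) ω = j}
        = ENNReal.ofReal (P (c k) j)

section NullMeasurable

open Set

variable {Ω : Type*} [MeasurableSpace Ω] {μ : Measure Ω}

theorem nullMeasurableSet_of_measure_add_measure_diff_le {A S : Set Ω}
    (hA : NullMeasurableSet A μ) (hAfin : μ A ≠ ⊤) (hSA : S ⊆ A)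
    (h : μ S + μ (A \ S) ≤ μ A) : NullMeasurableSet S μ := by
  set T := toMeasurable μ S
  set U := toMeasurable μ (A \ S)
  have hTU : μ (T ∩ U) = 0 := by
    have hcover : μ A ≤ μ (T ∪ U) := measure_mono fun ω hω => by
      by_cases hωS : ω ∈ S
      · exact Or.inl (subset_toMeasurable μ S hωS)
      · exact Or.inr (subset_toMeasurable μ (A \ S) ⟨hω, hωS⟩)
    have hadd : μ (T ∪ U) + μ (T ∩ U) = μ S + μ (A \ S) := by
      rw [measure_union_add_inter T (measurableSet_toMeasurable μ _), measure_toMeasurable,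
        measure_toMeasurable]
    have hfin : μ (T ∪ U) ≠ ⊤ := ne_top_of_le_ne_top hAfin ((le_self_add.trans_eq hadd).trans h)
    refine nonpos_iff_eq_zero.mp (ENNReal.le_of_add_le_add_left hfin ?_)
    rw [add_zero, hadd]
    exact h.trans hcover
  -- `S` differs from the measurable set `T ∩ toMeasurable μ A` only inside the null sets
  -- `T ∩ U` and `toMeasurable μ A \ A`.
  refine ((measurableSet_toMeasurable μ S).inter
    (measurableSet_toMeasurable μ A)).nullMeasurableSet.congr (ae_eq_set.mpr ⟨?_, ?_⟩)
  · refine measure_mono_null (fun ω ⟨⟨hωT, hωA⟩, hωS⟩ => ?_)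
      (measure_union_null hTU (ae_eq_set.mp hA.toMeasurable_ae_eq).1)
    by_cases hω : ω ∈ A
    · exact Or.inl ⟨hωT, subset_toMeasurable μ _ ⟨hω, hωS⟩⟩
    · exact Or.inr ⟨hωA, hω⟩
  · rw [sdiff_eq_empty.mpr (subset_inter (subset_toMeasurable μ S)
      (hSA.trans (subset_toMeasurable μ A))), measure_empty]

theorem nullMeasurableSet_of_sum_measure_le {ι : Type*} [Fintype ι] {A : Set Ω} {S : ι → Set Ω}
    (hA : NullMeasurableSet A μ) (hAfin : μ A ≠ ⊤) (hSA : ∀ i, S i ⊆ A) (hAS : A ⊆ ⋃ i, S i)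
    (hsum : ∑ i, μ (S i) ≤ μ A) (i : ι) : NullMeasurableSet (S i) μ := by
  classical
  refine nullMeasurableSet_of_measure_add_measure_diff_le hA hAfin (hSA i) ?_
  have hdiff : A \ S i ⊆ ⋃ j ∈ Finset.univ.erase i, S j := fun ω ⟨hωA, hωi⟩ => by
    obtain ⟨j, hj⟩ := mem_iUnion.mp (hAS hωA)
    exact mem_biUnion (Finset.mem_erase.mpr ⟨fun hji => hωi (hji ▸ hj), Finset.mem_univ j⟩) hj
  calc μ (S i) + μ (A \ S i) ≤ μ (S i) + ∑ j ∈ Finset.univ.erase i, μ (S j) := by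
        gcongr
        exact (measure_mono hdiff).trans (measure_biUnion_finset_le _ _)
    _ = ∑ j, μ (S j) := Finset.add_sum_erase _ (fun j => μ (S j)) (Finset.mem_univ i)
    _ ≤ μ A := hsum

theorem cond_apply₀ {A : Set Ω} (hA : NullMeasurableSet A μ) (B : Set Ω) :
    μ[B | A] = (μ A)⁻¹ * μ (A ∩ B) := by
  rw [ProbabilityTheory.cond, Measure.smul_apply, smul_eq_mul, Measure.restrict_apply₀' hA,
    inter_comm]

theorem cond_congr_of_inter_eq {A B B' : Set Ω} (hA : NullMeasurableSet A μ)
    (h : B ∩ A = B' ∩ A) : μ[B | A] = μ[B' | A] := by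
  rw [cond_apply₀ hA, cond_apply₀ hA, inter_comm, h, inter_comm]

end NullMeasurable

theorem RowStochastic.sum_ofReal_mul {I J : Type*} [Fintype I] [Fintype J] {P : I → I → ℝ}
    {Q : J → J → ℝ} (hP : RowStochastic P) (hQ : RowStochastic Q) (i : I) (j : J) :
    ∑ p : I × J, ENNReal.ofReal (P i p.1 * Q j p.2) = 1 := by
  rw [← ENNReal.ofReal_sum_of_nonneg fun p _ => mul_nonneg (hP.1 _ _) (hQ.1 _ _),
    Fintype.sum_prod_type, ← Finset.sum_mul_sum, hP.2, hQ.2, one_mul, ENNReal.ofReal_one]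

section PairMarkov

open Set

variable {N M : ℕ} {Ω : Type*} {r : ℕ → Ω → Fin N} {s : ℕ → Ω → Fin M}

def historyEvent (r : ℕ → Ω → Fin N) (s : ℕ → Ω → Fin M) (k : ℕ) (a : ℕ → Fin N)
    (b : ℕ → Fin M) : Set Ω :=
  {ω | ∀ j ≤ k, r j ω = a j ∧ s j ω = b j}

theorem historyEvent_succ (k : ℕ) (a : ℕ → Fin N) (b : ℕ → Fin M) :
    historyEvent r s (k + 1) a b =
      historyEvent r s k a b ∩ {ω | r (k + 1) ω = a (k + 1) ∧ s (k + 1) ω = b (k + 1)} := by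
  ext ω
  simp only [historyEvent, mem_inter_iff, mem_ofPred_eq, Nat.le_succ_iff, or_imp, forall_and,
    forall_eq, and_and_and_comm]

variable [MeasurableSpace Ω] {μ : Measure Ω} {P : Matrix (Fin N) (Fin N) ℝ}
  {Q : Matrix (Fin M) (Fin M) ℝ}

theorem IsPairMarkov.measure_inter_eq [IsFiniteMeasure μ] (hM : IsPairMarkov μ r s P Q)
    {k : ℕ} {a : ℕ → Fin N} {b : ℕ → Fin M} (hA : NullMeasurableSet (historyEvent r s k a b) μ)
    (α : Fin N) (β : Fin M) :
    μ (historyEvent r s k a b ∩ {ω | r (k + 1) ω = α ∧ s (k + 1) ω = β}) =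
      μ (historyEvent r s k a b) * ENNReal.ofReal (P (a k) α * Q (b k) β) := by
  by_cases h0 : μ (historyEvent r s k a b) = 0
  · rw [h0, zero_mul, measure_mono_null inter_subset_left h0]
  · have hcond : μ[_ | historyEvent r s k a b] = _ := hM k a b h0 α β
    rw [← hcond, cond_apply₀ hA, ENNReal.mul_inv_cancel_left h0 (measure_ne_top _ _)]

theorem IsPairMarkov.nullMeasurableSet_historyEvent [IsFiniteMeasure μ]
    (hP : RowStochastic P) (hQ : RowStochastic Q) (hM : IsPairMarkov μ r s P Q) {r₀ : Fin N}
    {s₀ : Fin M} (hr0 : ∀ ω, r 0 ω = r₀) (hs0 : ∀ ω, s 0 ω = s₀) :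
    ∀ (k : ℕ) (a : ℕ → Fin N) (b : ℕ → Fin M), NullMeasurableSet (historyEvent r s k a b) μ
  | 0, a, b => by
    have hconst : historyEvent r s 0 a b = {_ω | r₀ = a 0 ∧ s₀ = b 0} := by
      ext ω
      simp [historyEvent, hr0, hs0]
    exact hconst ▸ (MeasurableSet.const _).nullMeasurableSet
  | k + 1, a, b => by
    have hA := IsPairMarkov.nullMeasurableSet_historyEvent hP hQ hM hr0 hs0 k a b
    rw [historyEvent_succ]
    refine nullMeasurableSet_of_sum_measure_le (ι := Fin N × Fin M)
      (S := fun p => historyEvent r s k a b ∩ {ω | r (k + 1) ω = p.1 ∧ s (k + 1) ω = p.2})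
      hA (measure_ne_top _ _) (fun _ => inter_subset_left)
      (fun ω hω => mem_iUnion.mpr ⟨(r (k + 1) ω, s (k + 1) ω), hω, rfl, rfl⟩) ?_
      (a (k + 1), b (k + 1))
    simp only [hM.measure_inter_eq hA, ← Finset.mul_sum, hP.sum_ofReal_mul hQ, mul_one, le_refl]

end PairMarkov

theorem Nat.exists_le_add_one_iff {k : ℕ} {p : ℕ → Prop} :
    (∃ j ≤ k + 1, p j) ↔ p (k + 1) ∨ ∃ j ≤ k, p j := by
  simp only [Nat.le_succ_iff, or_and_right, exists_or, exists_eq_left, or_comm]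

theorem flT_add_one (T : ℕ) [NeZero T] (x : ℤ) : flT T (x + 1) = flT T x + 1 := by
  have hT : (0 : ℤ) < T := by exact_mod_cast Nat.pos_of_ne_zero (NeZero.ne T)
  have hnonneg : 0 ≤ (x - 1) % (T : ℤ) := Int.emod_nonneg _ hT.ne'
  ext
  rw [Fin.val_add, Fin.val_one', ← Int.toNat_natCast ((_ + _) % T)]
  simp only [flT]
  push_cast [Int.toNat_of_nonneg hnonneg]
  rw [← Int.add_emod, sub_add_cancel, add_sub_cancel_right]

section Rbar

variable {N M : ℕ} {Ω : Type*} {Λ : Set (Fin M)} {r : ℕ → Ω → Fin N} {s : ℕ → Ω → Fin M}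
  {k : ℕ} {ω : Ω}

open Classical in
theorem tauProc_zero (τ0 : ℤ) : tauProc Λ s τ0 0 ω = if s 0 ω ∈ Λ then 0 else τ0 := by
  simp [tauProc]

open Classical in
theorem tauProc_succ (τ0 : ℤ) :
    tauProc Λ s τ0 (k + 1) ω =
      if s (k + 1) ω ∈ Λ then ((k + 1 : ℕ) : ℤ) else tauProc Λ s τ0 k ω := by
  unfold tauProc
  split_ifs <;> simp_all [Nat.exists_le_add_one_iff]

open Classical in
theorem sigmaProc_zero (σ0 : Fin N) :
    sigmaProc Λ r s σ0 0 ω = if s 0 ω ∈ Λ then r 0 ω else σ0 := by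
  simp [sigmaProc]

open Classical in
theorem sigmaProc_succ (σ0 : Fin N) :
    sigmaProc Λ r s σ0 (k + 1) ω =
      if s (k + 1) ω ∈ Λ then r (k + 1) ω else sigmaProc Λ r s σ0 k ω := by
  unfold sigmaProc
  split_ifs <;> simp_all [Nat.exists_le_add_one_iff]

variable {T : ℕ} [NeZero T]

open Classical in
noncomputable def rbarStep (T : ℕ) [NeZero T] (Λ : Set (Fin M))
    (x : Fin N × Fin M × Fin N × Fin T) (α : Fin N) (β : Fin M) :
    Fin N × Fin M × Fin N × Fin T :=
  if β ∈ Λ then (α, β, α, flT T 1) else (α, β, x.2.2.1, x.2.2.2 + 1)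

theorem rbarStep_eq_iff {x χ' : Fin N × Fin M × Fin N × Fin T} {α : Fin N} {β : Fin M} :
    rbarStep T Λ x α β = χ' ↔ α = χ'.1 ∧ β = χ'.2.1 ∧ rbarStep T Λ x χ'.1 χ'.2.1 = χ' := by
  obtain ⟨α', β', γ', δ'⟩ := χ'
  unfold rbarStep
  split_ifs <;> aesop

open Classical in
theorem pbar_eq_ite (P : Matrix (Fin N) (Fin N) ℝ) (Q : Matrix (Fin M) (Fin M) ℝ)
    (χ χ' : Fin N × Fin M × Fin N × Fin T) :
    pbar P Q Λ χ χ' =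
      if rbarStep T Λ χ χ'.1 χ'.2.1 = χ' then P χ.1 χ'.1 * Q χ.2.1 χ'.2.1 else 0 := by
  obtain ⟨α', β', γ', δ'⟩ := χ'
  unfold pbar rbarStep
  by_cases hβ : β' ∈ Λ <;> simp [hβ, eq_comm]

theorem rbar_succ (τ0 : ℤ) (σ0 : Fin N) :
    rbar T Λ r s τ0 σ0 (k + 1) ω =
      rbarStep T Λ (rbar T Λ r s τ0 σ0 k ω) (r (k + 1) ω) (s (k + 1) ω) := by
  by_cases hΛ : s (k + 1) ω ∈ Λ
  · simp [rbar, rbarStep, tauProc_succ, sigmaProc_succ, hΛ]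
  · simp only [rbar, rbarStep, tauProc_succ, sigmaProc_succ, hΛ, if_false, ← flT_add_one]
    push_cast
    ring_nf

theorem rbar_eq_of_history_eq (τ0 : ℤ) (σ0 : Fin N) {ω' : Ω} :
    ∀ {k}, (∀ j ≤ k, r j ω = r j ω' ∧ s j ω = s j ω') →
      rbar T Λ r s τ0 σ0 k ω = rbar T Λ r s τ0 σ0 k ω'
  | 0, h => by
    obtain ⟨hr, hs⟩ := h 0 le_rfl
    rw [rbar, rbar, tauProc_zero, tauProc_zero, sigmaProc_zero, sigmaProc_zero, hr, hs]
  | k + 1, h => by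
    rw [rbar_succ, rbar_succ, rbar_eq_of_history_eq τ0 σ0 fun j hj => h j (by omega),
      (h (k + 1) le_rfl).1, (h (k + 1) le_rfl).2]

theorem rbar_history_eq_historyEvent {τ0 : ℤ} {σ0 : Fin N}
    {χ : ℕ → Fin N × Fin M × Fin N × Fin T} {ω₀ : Ω}
    (hω₀ : ω₀ ∈ {ω | ∀ j ≤ k, rbar T Λ r s τ0 σ0 j ω = χ j}) :
    {ω | ∀ j ≤ k, rbar T Λ r s τ0 σ0 j ω = χ j} =
      historyEvent r s k (fun j => (χ j).1) (fun j => (χ j).2.1) := by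
  have hsub : {ω | ∀ j ≤ k, rbar T Λ r s τ0 σ0 j ω = χ j} ⊆
      historyEvent r s k (fun j => (χ j).1) (fun j => (χ j).2.1) := fun ω hω j hj =>
    ⟨congrArg Prod.fst (hω j hj), congrArg (·.2.1) (hω j hj)⟩
  refine Set.Subset.antisymm hsub fun ω hω j hj => ?_
  rw [rbar_eq_of_history_eq τ0 σ0 (ω' := ω₀) fun i hi => ?_]
  · exact hω₀ j hj
  · obtain ⟨hr, hs⟩ := hω i (hi.trans hj)
    obtain ⟨hr₀, hs₀⟩ := hsub hω₀ i (hi.trans hj)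
    exact ⟨hr.trans hr₀.symm, hs.trans hs₀.symm⟩

end Rbar

theorem rbar_is_time_homogeneous_markov_general
    {N M T : ℕ} [NeZero T]
    (P : Matrix (Fin N) (Fin N) ℝ) (Q : Matrix (Fin M) (Fin M) ℝ)
    (hP : RowStochastic P) (hQ : RowStochastic Q)
    (Λ : Set (Fin M))
    (Ω : Type) [MeasurableSpace Ω] (μ : Measure Ω) [IsProbabilityMeasure μ]
    (r : ℕ → Ω → Fin N) (s : ℕ → Ω → Fin M) (r₀ : Fin N) (s₀ : Fin M)
    (hr0 : ∀ ω, r 0 ω = r₀) (hs0 : ∀ ω, s 0 ω = s₀)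
    (hMarkov : IsPairMarkov μ r s P Q)
    (τ₀ : ℤ) (σ₀ : Fin N)
    (k : ℕ) (χ : ℕ → Fin N × Fin M × Fin N × Fin T)
    (hpos : μ {ω | ∀ j ≤ k, rbar T Λ r s τ₀ σ₀ j ω = χ j} ≠ 0)
    (χ' : Fin N × Fin M × Fin N × Fin T) :
    ProbabilityTheory.cond μ {ω | ∀ j ≤ k, rbar T Λ r s τ₀ σ₀ j ω = χ j}
        {ω | rbar T Λ r s τ₀ σ₀ (k+1) ω = χ'}
      = ENNReal.ofReal (pbar P Q Λ (χ k) χ') := by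
  set E := {ω | ∀ j ≤ k, rbar T Λ r s τ₀ σ₀ j ω = χ j}
  obtain ⟨ω₀, hω₀⟩ := nonempty_of_measure_ne_zero hpos
  have hEA : E = _ := rbar_history_eq_historyEvent hω₀
  have hE : NullMeasurableSet E μ := by
    rw [hEA]
    exact hMarkov.nullMeasurableSet_historyEvent hP hQ hr0 hs0 k _ _
  have hstep : {ω | rbar T Λ r s τ₀ σ₀ (k + 1) ω = χ'} ∩ E =
      {ω | r (k + 1) ω = χ'.1 ∧ s (k + 1) ω = χ'.2.1 ∧ rbarStep T Λ (χ k) χ'.1 χ'.2.1 = χ'} ∩ E := by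
    ext ω
    simp only [Set.mem_inter_iff, Set.mem_ofPred_eq]
    exact and_congr_left fun hω => by rw [rbar_succ, hω k le_rfl, rbarStep_eq_iff]
  rw [cond_congr_of_inter_eq hE hstep, pbar_eq_ite]
  by_cases hχ' : rbarStep T Λ (χ k) χ'.1 χ'.2.1 = χ'
  · simp only [hχ', and_true, if_true]
    rw [hEA] at hpos ⊢
    exact hMarkov k _ _ hpos _ _
  · simp [hχ']

/-- The extended process `r̄(k) = (r(k), s(k), σ(k), ⌊k+1−τ(k)⌋_T)` is a
time-homogeneous Markov chain on `X̄` with transition matrix `p̄`: for every `k`, every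
history `χ₀, …, χ_k` of positive probability and every `χ'`,
`ℙ(r̄(k+1) = χ' ∣ r̄(k) = χ_k, …, r̄(0) = χ₀) = p̄_{χ_k, χ'}`. -/
theorem rbar_is_time_homogeneous_markov
    {n m N M T : ℕ} [NeZero n] [NeZero m] [NeZero N] [NeZero M] [NeZero T]
    (P : Matrix (Fin N) (Fin N) ℝ) (Q : Matrix (Fin M) (Fin M) ℝ)
    (hP : RowStochastic P) (hQ : RowStochastic Q)
    (Λ : Set (Fin M)) (hΛ : Λ.Nonempty)
    (Ω : Type) [MeasurableSpace Ω] (μ : Measure Ω) [IsProbabilityMeasure μ]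
    (r : ℕ → Ω → Fin N) (s : ℕ → Ω → Fin M) (r₀ : Fin N) (s₀ : Fin M)
    (hr0 : ∀ ω, r 0 ω = r₀) (hs0 : ∀ ω, s 0 ω = s₀)
    (hMarkov : IsPairMarkov μ r s P Q)
    (hinf : μ {ω | {k : ℕ | s k ω ∈ Λ}.Infinite} = 1)
    (τ₀ : ℤ) (hτ₀ : τ₀ < 0) (σ₀ : Fin N)
    (k : ℕ) (χ : ℕ → Fin N × Fin M × Fin N × Fin T)
    (hpos : μ {ω | ∀ j ≤ k, rbar T Λ r s τ₀ σ₀ j ω = χ j} ≠ 0)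
    (χ' : Fin N × Fin M × Fin N × Fin T) :
    ProbabilityTheory.cond μ {ω | ∀ j ≤ k, rbar T Λ r s τ₀ σ₀ j ω = χ j}
        {ω | rbar T Λ r s τ₀ σ₀ (k+1) ω = χ'}
      = ENNReal.ofReal (pbar P Q Λ (χ k) χ') :=
  rbar_is_time_homogeneous_markov_general P Q hP hQ Λ Ω μ r s r₀ s₀ hr0 hs0 hMarkov τ₀ σ₀ k χ hpos
    χ'
end

section
/- Let τ ≥ 2 be an integer and p ∈ (0,1]. Let s be a time-homogeneous Markov chain on {1,…,τ+1} with deterministic initial state s₀ and transition probabilities: from state 1 the chain moves to state 3 with probability 1; from state 2 the chain moves to state 3 with probability 1; from state j with 3 ≤ j ≤ τ the chain moves to state j+1 with probability 1; and from state τ+1 the chain moves to state 1 with probability p and to state 2 with probability 1−p. Let Λ = {1}. Then almost surely the set {k ∈ ℕ : s(k) ∈ Λ} is infinite, and with t₀ < t₁ < ⋯ its increasing enumeration, the increments {t_{i+1} − t_i}_{i≥0} are mutually independent and identically distributed with ℙ(t_{i+1} − t_i = kτ) = (1−p)^{k−1} p for every integer k ≥ 1 (so each increment lies in {τ, 2τ,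 3τ, …} almost surely). -/
open MeasureTheory ProbabilityTheory

/-!
Between two visits to the last state `τ` the chain moves deterministically, so consecutive visits
to `τ` are exactly `τ` steps apart, and at each of them a coin with heads probability `p` sends the
chain to the observed state `0` or to `1`. The observation times are therefore, up to an offset,
`τ` times the positions of the heads of a Bernoulli sequence, and their increments are `τ` times one
plus the numbers of tails between consecutive heads, which are i.i.d. geometric.

The hypotheses only control outer measures of cylinder events, which need not be measurable. Every
law is therefore identified through upper bounds, coming from the transition probabilities, that
are equalities because the events cover almost everything and the bounds have total mass one.
-/

open Finset

open scoped ENNReal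

section Cover

variable {Ω : Type*} [MeasurableSpace Ω] {μ : Measure Ω}

theorem measure_biUnion_eq_of_ae_cover [IsProbabilityMeasure μ] {ι : Type*} [Countable ι]
    {E : ι → Set Ω} {w : ι → ℝ≥0∞} (hcover : ∀ᵐ ω ∂μ, ∃ i, ω ∈ E i)
    (hle : ∀ i, μ (E i) ≤ w i) (hw : ∑' i, w i ≤ 1) (S : Set ι) :
    μ (⋃ i ∈ S, E i) = ∑' i, S.indicator w i := by
  have hbound : ∀ T : Set ι, μ (⋃ i ∈ T, E i) ≤ ∑' i, T.indicator w i := fun T =>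
    calc μ (⋃ i ∈ T, E i) ≤ ∑' i : T, μ (E i) := measure_biUnion_le μ T.to_countable E
      _ ≤ ∑' i : T, w i := ENNReal.tsum_le_tsum fun i => hle i
      _ = ∑' i, T.indicator w i := tsum_subtype T w
  refine le_antisymm (hbound S) ?_
  have hsplit : ∑' i, S.indicator w i + ∑' i, Sᶜ.indicator w i = ∑' i, w i := by
    rw [← ENNReal.tsum_add]
    exact tsum_congr fun i => Set.indicator_self_add_compl_apply S w i
  have hunion : (⋃ i, E i) ⊆ (⋃ i ∈ S, E i) ∪ ⋃ i ∈ Sᶜ, E i := by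
    intro ω hω
    obtain ⟨i, hi⟩ := Set.mem_iUnion.1 hω
    by_cases hiS : i ∈ S
    · exact Or.inl (Set.mem_biUnion hiS hi)
    · exact Or.inr (Set.mem_biUnion hiS hi)
  have hone : 1 ≤ μ (⋃ i ∈ S, E i) + ∑' i, Sᶜ.indicator w i :=
    calc 1 = μ (⋃ i, E i) := by
          rw [← measure_univ (μ := μ)]
          exact (measure_congr (Filter.eventuallyEq_set.2
            (hcover.mono fun ω h => by simpa using h))).symm
      _ ≤ μ (⋃ i ∈ S, E i) + μ (⋃ i ∈ Sᶜ, E i) := (measure_mono hunion).trans (measure_union_le _ _)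
      _ ≤ _ := by gcongr; exact hbound Sᶜ
  have hfin : ∑' i, Sᶜ.indicator w i ≠ ⊤ :=
    ne_top_of_le_ne_top ENNReal.one_ne_top (le_trans le_add_self (hsplit.trans_le hw))
  exact (ENNReal.add_le_add_iff_right hfin).1 ((hsplit.trans_le hw).trans hone)

end Cover

section Independence

variable {Ω β : Type*} [MeasurableSpace Ω] [MeasurableSpace β] {μ : Measure Ω} {X : ℕ → Ω → β}
  {ν : Measure β}

theorem measure_iInter_preimage_eq_prod [IsProbabilityMeasure ν]
    (h : ∀ n (B : ℕ → Set β), (∀ i, MeasurableSet (B i)) →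
      μ {ω | ∀ i < n, X i ω ∈ B i} = ∏ i ∈ range n, ν (B i))
    (S : Finset ℕ) {B : ℕ → Set β} (hB : ∀ i ∈ S, MeasurableSet (B i)) :
    μ (⋂ i ∈ S, X i ⁻¹' B i) = ∏ i ∈ S, ν (B i) := by
  set N := S.sup id + 1
  have hS : S ⊆ range N := fun i hi => mem_range.2 (Nat.lt_succ_of_le (le_sup (f := id) hi))
  have hN := h N (fun i => if i ∈ S then B i else Set.univ) fun i => by
    split_ifs with hi
    exacts [hB i hi, .univ]
  calc μ (⋂ i ∈ S, X i ⁻¹' B i)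
      = μ {ω | ∀ i < N, X i ω ∈ if i ∈ S then B i else Set.univ} := by
        congr 1
        ext ω
        simp only [Set.mem_iInter, Set.mem_preimage, Set.mem_ofPred_eq]
        refine ⟨fun hω i _ => ?_, fun hω i hi => by simpa [hi] using hω i (mem_range.1 (hS hi))⟩
        split_ifs with hi
        exacts [hω i hi, trivial]
    _ = ∏ i ∈ S, ν (B i) := by
        simp_rw [hN, apply_ite ν, measure_univ]
        rw [prod_ite_mem, inter_eq_right.2 hS]

theorem iIndepFun_of_measure_forall_mem_eq_prod [IsProbabilityMeasure ν]
    (h : ∀ n (B : ℕ → Set β), (∀ i, MeasurableSet (B i)) →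
      μ {ω | ∀ i < n, X i ω ∈ B i} = ∏ i ∈ range n, ν (B i)) :
    iIndepFun X μ := by
  refine iIndepFun_iff_measure_inter_preimage_eq_mul.2 fun S B hB => ?_
  rw [measure_iInter_preimage_eq_prod h S hB]
  refine prod_congr rfl fun i hi => ?_
  simpa using (measure_iInter_preimage_eq_prod h {i} (by simpa using hB i hi)).symm

theorem measure_preimage_eq_of_measure_forall_mem_eq_prod [IsProbabilityMeasure ν]
    (h : ∀ n (B : ℕ → Set β), (∀ i, MeasurableSet (B i)) →
      μ {ω | ∀ i < n, X i ω ∈ B i} = ∏ i ∈ range n, ν (B i))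
    (i : ℕ) {B : Set β} (hB : MeasurableSet B) : μ (X i ⁻¹' B) = ν B := by
  simpa using measure_iInter_preimage_eq_prod h {i} (B := fun _ => B) (by simpa using hB)

end Independence

namespace IsMarkov

variable {S Ω : Type*} [MeasurableSpace Ω] {μ : Measure Ω} {X : ℕ → Ω → S} {P : S → S → ℝ}

theorem measure_cylinder_inter_le [IsFiniteMeasure μ] (hM : IsMarkov μ X P) (k : ℕ) (c : ℕ → S)
    (j : S) :
    μ ({ω | ∀ i ≤ k, X i ω = c i} ∩ {ω | X (k + 1) ω = j})
      ≤ ENNReal.ofReal (P (c k) j) * μ {ω | ∀ i ≤ k, X i ω = c i} := by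
  set E := {ω | ∀ i ≤ k, X i ω = c i}
  by_cases hE : μ E = 0
  · rw [hE, mul_zero]
    exact (measure_mono Set.inter_subset_left).trans hE.le
  calc μ (E ∩ {ω | X (k + 1) ω = j}) ≤ μ.restrict E {ω | X (k + 1) ω = j} := by
        rw [Set.inter_comm]; exact Measure.le_restrict_apply _ _
    _ = ProbabilityTheory.cond μ E {ω | X (k + 1) ω = j} * μ E := by
        rw [ProbabilityTheory.cond, Measure.smul_apply, smul_eq_mul, mul_comm, ← mul_assoc,
          ENNReal.mul_inv_cancel hE (measure_ne_top μ E), one_mul]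
    _ = _ := by rw [hM k c hE j]

theorem measure_cylinder_le [IsFiniteMeasure μ] (hM : IsMarkov μ X P) (c : ℕ → S) (k : ℕ) :
    μ {ω | ∀ i ≤ k, X i ω = c i}
      ≤ μ {ω | X 0 ω = c 0} * ∏ i ∈ range k, ENNReal.ofReal (P (c i) (c (i + 1))) := by
  induction k with
  | zero => simp
  | succ k ih =>
    have hsplit : {ω | ∀ i ≤ k + 1, X i ω = c i}
        = {ω | ∀ i ≤ k, X i ω = c i} ∩ {ω | X (k + 1) ω = c (k + 1)} := by
      ext ω
      simp only [Set.mem_ofPred_eq, Set.mem_inter_iff, Nat.le_succ_iff]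
      exact ⟨fun h => ⟨fun i hi => h i (Or.inl hi), h _ (Or.inr rfl)⟩,
        fun h i hi => hi.elim (h.1 i) fun hi => hi ▸ h.2⟩
    rw [hsplit, prod_range_succ]
    calc _ ≤ ENNReal.ofReal (P (c k) (c (k + 1))) * μ {ω | ∀ i ≤ k, X i ω = c i} :=
          hM.measure_cylinder_inter_le k c _
      _ ≤ _ := by rw [mul_comm, ← mul_assoc]; gcongr

theorem ae_forall_transition_pos [IsFiniteMeasure μ] [Countable S] (hM : IsMarkov μ X P) :
    ∀ᵐ ω ∂μ, ∀ k, 0 < P (X k ω) (X (k + 1) ω) := by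
  refine ae_all_iff.2 fun k => ?_
  let F (v : Fin (k + 2) → S) : Set Ω :=
    {ω | ¬ 0 < P (X k ω) (X (k + 1) ω) ∧ ∀ i : Fin (k + 2), X i ω = v i}
  have hcover : {ω | ¬ 0 < P (X k ω) (X (k + 1) ω)} ⊆ ⋃ v, F v :=
    fun ω hω => Set.mem_iUnion.2 ⟨fun i => X i ω, hω, fun _ => rfl⟩
  refine measure_mono_null hcover (measure_iUnion_null fun v => ?_)
  rcases (F v).eq_empty_or_nonempty with hempty | ⟨ω₀, hω₀, hv⟩
  · rw [hempty, measure_empty]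
  -- `F v` lies in the cylinder of the path of `ω₀`, whose last transition has probability zero
  have hsub : F v ⊆ {ω | ∀ i ≤ k + 1, X i ω = X i ω₀} := fun ω hω i hi => by
    simpa [hv ⟨i, by omega⟩] using hω.2 ⟨i, by omega⟩
  refine measure_mono_null hsub (le_antisymm ?_ zero_le)
  refine (hM.measure_cylinder_le (fun i => X i ω₀) (k + 1)).trans_eq ?_
  rw [prod_range_succ, ENNReal.ofReal_eq_zero.2 (not_lt.1 hω₀), mul_zero, mul_zero]

end IsMarkov

section Coins

variable {Ω : Type*} [MeasurableSpace Ω] {μ : Measure Ω} {p : unitInterval}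

noncomputable def coinWeight (p : unitInterval) (b : Bool) : ℝ≥0∞ :=
  ENNReal.ofReal (if b then (p : ℝ) else 1 - p)

/-- Independent coins showing heads (`true`) with probability `p`, stated on rectangles so that only
outer measures of possibly non-measurable events enter. -/
def IsBernoulliSeq (μ : Measure Ω) (p : unitInterval) (C : Ω → ℕ → Bool) : Prop :=
  ∀ (L : ℕ) (t : ℕ → Finset Bool),
    μ {ω | ∀ m < L, C ω m ∈ t m} = ∏ m ∈ range L, ∑ b ∈ t m, coinWeight p b

theorem coinWeight_true_add_false (p : unitInterval) :
    coinWeight p true + coinWeight p false = 1 := by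
  rw [coinWeight, coinWeight, if_pos rfl, if_neg Bool.false_ne_true,
    ← ENNReal.ofReal_add p.2.1 (sub_nonneg.2 p.2.2), add_sub_cancel, ENNReal.ofReal_one]

theorem prod_coinWeight (p : unitInterval) (b : ℕ → Bool) (L : ℕ) :
    ∏ m ∈ range L, coinWeight p (b m) = ENNReal.ofReal p ^ Nat.count (b · = true) L
      * ENNReal.ofReal (1 - p) ^ (L - Nat.count (b · = true) L) := by
  induction L with
  | zero => simp
  | succ L ih =>
    have hcount := Nat.count_le (b · = true) (n := L)
    rw [prod_range_succ, ih, Nat.count_succ]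
    cases b L
    · simp only [coinWeight, Bool.false_eq_true, if_false, add_zero,
        Nat.succ_sub hcount, pow_succ, mul_assoc]
    · simp only [coinWeight, if_true, pow_succ, Nat.add_sub_add_right]
      ring

theorem isBernoulliSeq_of_le [IsProbabilityMeasure μ] {C : Ω → ℕ → Bool}
    (h : ∀ (L : ℕ) (v : ℕ → Bool),
      μ {ω | ∀ m < L, C ω m = v m} ≤ ∏ m ∈ range L, coinWeight p (v m)) :
    IsBernoulliSeq μ p C := by
  intro L t
  let pad (u : Fin L → Bool) (m : ℕ) : Bool := if hm : m < L then u ⟨m, hm⟩ else false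
  have hpad : ∀ u (f : Bool → ℝ≥0∞), ∏ m ∈ range L, f (pad u m) = ∏ m, f (u m) := fun u f => by
    rw [← Fin.prod_univ_eq_prod_range]; simp [pad]
  let E (u : Fin L → Bool) : Set Ω := {ω | ∀ m < L, C ω m = pad u m}
  have hsum : ∀ t : ℕ → Finset Bool,
      ∑' u, (Fintype.piFinset fun m : Fin L => t m : Set (Fin L → Bool)).indicator
        (fun u => ∏ m, coinWeight p (u m)) u = ∏ m ∈ range L, ∑ b ∈ t m, coinWeight p b :=
    fun t => by
    rw [← sum_eq_tsum_indicator, ← prod_univ_sum,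
      Fin.prod_univ_eq_prod_range (fun m => ∑ b ∈ t m, coinWeight p b)]
  have key := measure_biUnion_eq_of_ae_cover (E := E) (w := fun u => ∏ m, coinWeight p (u m))
    (ae_of_all _ fun ω => ⟨fun m => C ω m, fun m hm => by simp [pad, hm]⟩)
    (fun u => (h L (pad u)).trans_eq (hpad u _))
    (by simpa [coinWeight_true_add_false] using (hsum fun _ => univ).le)
    (Fintype.piFinset fun m : Fin L => t m)
  rw [hsum] at key
  rw [← key]
  congr 1
  ext ω
  simp only [Set.mem_ofPred_eq, Set.mem_iUnion, Finset.mem_coe, Fintype.mem_piFinset, exists_prop,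
    E]
  constructor
  · intro hω
    exact ⟨fun m => C ω m, fun m => hω m m.2, fun m hm => by simp [pad, hm]⟩
  · rintro ⟨u, hu, hω⟩ m hm
    simpa [hω m hm, pad, hm] using hu ⟨m, hm⟩

theorem IsBernoulliSeq.ae_infinite_heads {C : Ω → ℕ → Bool} (hC : IsBernoulliSeq μ p C)
    (hp : p ≠ 0) : ∀ᵐ ω ∂μ, {m | C ω m = true}.Infinite := by
  set q := ENNReal.ofReal (1 - p)
  have hq : q < 1 := ENNReal.ofReal_lt_one.2 (sub_lt_self 1 (unitInterval.pos_iff_ne_zero.2 hp))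
  -- after `N`, tails on `j` further coins have probability `q ^ j`
  have htails : ∀ N j, μ {ω | ∀ m, N ≤ m → C ω m = false} ≤ q ^ j := fun N j => by
    let t (m : ℕ) : Finset Bool := if m < N then univ else {false}
    calc μ {ω | ∀ m, N ≤ m → C ω m = false} ≤ μ {ω | ∀ m < N + j, C ω m ∈ t m} :=
          measure_mono fun ω hω m _ => by
            by_cases hm : m < N
            · simp [t, hm]
            · simp [t, hm, hω m (not_lt.1 hm)]
      _ = q ^ j := by
          rw [hC, prod_range_add,
            prod_eq_one fun m hm => by simp [t, mem_range.1 hm, coinWeight_true_add_false]]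
          simp [t, coinWeight, q]
  have hnull : ∀ N, μ {ω | ∀ m, N ≤ m → C ω m = false} = 0 := fun N =>
    le_antisymm (ge_of_tendsto' (ENNReal.tendsto_pow_atTop_nhds_zero_of_lt_one hq) (htails N))
      zero_le
  refine measure_mono_null (fun ω hω => ?_) (measure_iUnion_null hnull)
  obtain ⟨N, hN⟩ := (Set.not_infinite.1 hω).bddAbove
  exact Set.mem_iUnion.2 ⟨N + 1, fun m hm => by
    by_contra h
    have := hN (show m ∈ {m | C ω m = true} by simpa using h)
    omega⟩

end Coins

section Gaps

/-- The number of coins up to and including the `j`-th head, heads being counted from one. -/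
noncomputable def headEnd (b : ℕ → Bool) : ℕ → ℕ
  | 0 => 0
  | j + 1 => Nat.nth (b · = true) j + 1

/-- The number of tails between the `j`-th and the `(j + 1)`-st head (before the first head for
`j = 0`). -/
noncomputable def gap (b : ℕ → Bool) (j : ℕ) : ℕ := Nat.nth (b · = true) j - headEnd b j

variable {b b' : ℕ → Bool}

theorem headEnd_succ (hb : {m | b m = true}.Infinite) (j : ℕ) :
    headEnd b (j + 1) = headEnd b j + gap b j + 1 := by
  have hle : headEnd b j ≤ Nat.nth (b · = true) j := by
    cases j with
    | zero => exact Nat.zero_le _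
    | succ j => exact Nat.nth_strictMono hb (Nat.lt_succ_self j)
  have hsucc : headEnd b (j + 1) = Nat.nth (b · = true) j + 1 := rfl
  rw [hsucc, gap]
  omega

theorem headEnd_eq_sum (hb : {m | b m = true}.Infinite) (n : ℕ) :
    headEnd b n = ∑ j ∈ range n, (gap b j + 1) := by
  induction n with
  | zero => rfl
  | succ n ih => rw [headEnd_succ hb, sum_range_succ, ih, add_assoc]

theorem count_headEnd (hb : {m | b m = true}.Infinite) (n : ℕ) :
    Nat.count (b · = true) (headEnd b n) = n := by
  cases n with
  | zero => exact Nat.count_zero _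
  | succ n =>
    rw [headEnd, Nat.count_succ, if_pos (Nat.nth_mem_of_infinite hb n),
      Nat.count_nth_of_infinite hb]

theorem headEnd_congr (hb : {m | b m = true}.Infinite) (hb' : {m | b' m = true}.Infinite)
    {n : ℕ} (h : ∀ j < n, gap b j = gap b' j) : headEnd b n = headEnd b' n := by
  simp only [headEnd_eq_sum hb, headEnd_eq_sum hb']
  exact sum_congr rfl fun j hj => by rw [h j (mem_range.1 hj)]

theorem head_of_headEnd_eq (hb : {m | b m = true}.Infinite)
    (hb' : {m | b' m = true}.Infinite) {n : ℕ} (h : ∀ j ≤ n, headEnd b j = headEnd b' j) {m : ℕ}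
    (hm : m < headEnd b n) (hbm : b m = true) : b' m = true := by
  obtain ⟨n, rfl⟩ : ∃ k, n = k + 1 :=
    Nat.exists_eq_succ_of_ne_zero (by rintro rfl; exact Nat.not_lt_zero m hm)
  have hcount : Nat.count (b · = true) m ≤ n :=
    (Nat.count_le_iff_le_nth hb).2 (Nat.lt_succ_iff.1 hm)
  have hnth := h _ (Nat.succ_le_succ hcount)
  simp only [headEnd, Nat.nth_count (p := (b · = true)) hbm, Nat.add_right_cancel_iff] at hnth
  exact hnth ▸ Nat.nth_mem_of_infinite hb' _

theorem eq_of_headEnd_eq (hb : {m | b m = true}.Infinite) (hb' : {m | b' m = true}.Infinite)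
    {n : ℕ} (h : ∀ j ≤ n, headEnd b j = headEnd b' j) {m : ℕ} (hm : m < headEnd b n) :
    b m = b' m :=
  Bool.eq_iff_iff.2 ⟨head_of_headEnd_eq hb hb' h hm,
    head_of_headEnd_eq hb' hb (fun j hj => (h j hj).symm) (h n le_rfl ▸ hm)⟩

end Gaps

section GapLaw

variable {Ω : Type*} [MeasurableSpace Ω] {μ : Measure Ω} {p : unitInterval} {C : Ω → ℕ → Bool}

theorem IsBernoulliSeq.measure_gaps_eq_le (hC : IsBernoulliSeq μ p C) {n : ℕ} (u : Fin n → ℕ) :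
    μ {ω | {m | C ω m = true}.Infinite ∧ ∀ j : Fin n, gap (C ω) j = u j}
      ≤ ∏ j, ENNReal.ofReal ((1 - p) ^ u j * p) := by
  set F := {ω | {m | C ω m = true}.Infinite ∧ ∀ j : Fin n, gap (C ω) j = u j}
  rcases F.eq_empty_or_nonempty with hF | ⟨ω₀, hinf₀, hu₀⟩
  · rw [hF, measure_empty]
    exact zero_le
  -- every outcome in `F` repeats the coins of `ω₀` up to its `n`-th head
  set b₀ := C ω₀
  have hsub : F ⊆ {ω | ∀ m < headEnd b₀ n, C ω m ∈ ({b₀ m} : Finset Bool)} := by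
    rintro ω ⟨hinf, hu⟩ m hm
    have hgap : ∀ j < n, gap b₀ j = gap (C ω) j := fun j hj => by
      simpa [hu ⟨j, hj⟩] using hu₀ ⟨j, hj⟩
    exact mem_singleton.2 (eq_of_headEnd_eq hinf₀ hinf
      (fun j hj => headEnd_congr hinf₀ hinf fun i hi => hgap i (by omega)) hm).symm
  have hlen : headEnd b₀ n - n = ∑ j, u j := by
    rw [headEnd_eq_sum hinf₀, sum_add_distrib, sum_const, card_range, smul_eq_mul, mul_one,
      Nat.add_sub_cancel, ← Fin.sum_univ_eq_sum_range]
    exact sum_congr rfl fun j _ => hu₀ j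
  calc μ F ≤ _ := measure_mono hsub
    _ = ENNReal.ofReal p ^ n * ENNReal.ofReal (1 - p) ^ ∑ j, u j := by
      rw [hC]
      simp only [sum_singleton]
      rw [prod_coinWeight, count_headEnd hinf₀, hlen]
    _ = _ := by
      simp_rw [ENNReal.ofReal_mul' p.2.1, ENNReal.ofReal_pow (sub_nonneg.2 p.2.2)]
      rw [prod_mul_distrib, prod_pow_eq_pow_sum, prod_const, card_univ, Fintype.card_fin,
        mul_comm]

theorem IsBernoulliSeq.measure_forall_gap_mem [IsProbabilityMeasure μ] (hC : IsBernoulliSeq μ p C)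
    (hp : p ≠ 0) (n : ℕ) (A : ℕ → Set ℕ) :
    μ {ω | ∀ j < n, gap (C ω) j ∈ A j} = ∏ j ∈ range n, geometricMeasure p (A j) := by
  set π := Measure.pi fun _ : Fin n => geometricMeasure p
  let E (u : Fin n → ℕ) : Set Ω :=
    {ω | {m | C ω m = true}.Infinite ∧ ∀ j : Fin n, gap (C ω) j = u j}
  have hinf := hC.ae_infinite_heads hp
  have key := measure_biUnion_eq_of_ae_cover (E := E) (w := fun u => π {u})
    (hinf.mono fun ω hω => ⟨fun j => gap (C ω) j, hω, fun _ => rfl⟩)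
    (fun u => (hC.measure_gaps_eq_le u).trans_eq (by
      rw [← Set.univ_pi_singleton, Measure.pi_pi]
      simp [geometricMeasure_singleton hp]))
    (by simpa using (Measure.tsum_indicator_apply_singleton π Set.univ MeasurableSet.univ).le)
    (Set.univ.pi fun j => A j)
  rw [Measure.tsum_indicator_apply_singleton π _ MeasurableSet.of_discrete, Measure.pi_pi,
    Fin.prod_univ_eq_prod_range (fun j => geometricMeasure p (A j))] at key
  rw [← key]
  refine measure_congr (Filter.eventuallyEq_set.2 (hinf.mono fun ω hω => ?_))
  simp only [Set.mem_ofPred_eq, Set.mem_iUnion, Set.mem_univ_pi, exists_prop, E]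
  constructor
  · exact fun h => ⟨fun j => gap (C ω) j, fun j => h j j.2, hω, fun _ => rfl⟩
  · rintro ⟨u, hu, -, hg⟩ j hj
    simpa [hg ⟨j, hj⟩] using hu ⟨j, hj⟩

theorem IsBernoulliSeq.measure_forall_gap_add_mem [IsProbabilityMeasure μ]
    (hC : IsBernoulliSeq μ p C) (hp : p ≠ 0) (w n : ℕ) (A : ℕ → Set ℕ) :
    μ {ω | ∀ j < n, gap (C ω) (w + j) ∈ A j} = ∏ j ∈ range n, geometricMeasure p (A j) := by
  have h := hC.measure_forall_gap_mem hp (w + n) fun j => if w ≤ j then A (j - w) else Set.univ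
  rw [prod_range_add, prod_eq_one fun j hj => by simp [not_le.2 (mem_range.1 hj)], one_mul] at h
  simp only [Nat.le_add_right, if_true, Nat.add_sub_cancel_left] at h
  rw [← h]
  congr 1
  ext ω
  simp only [Set.mem_ofPred_eq]
  constructor
  · intro hω j hj
    split_ifs with hwj
    · simpa [Nat.add_sub_cancel' hwj] using hω (j - w) (by omega)
    · trivial
  · intro hω j hj
    simpa using hω (w + j) (by omega)

end GapLaw

section GeometricMultiples

variable {p : unitInterval}

theorem map_geometricMeasure_apply (τ : ℕ) (B : Set ℕ) :
    (geometricMeasure p).map (fun g => (g + 1) * τ) B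
      = geometricMeasure p {g | (g + 1) * τ ∈ B} :=
  Measure.map_apply .of_discrete .of_discrete

theorem map_geometricMeasure_singleton_mul (hp : p ≠ 0) {τ k : ℕ} (hτ : τ ≠ 0) (hk : 1 ≤ k) :
    (geometricMeasure p).map (fun g => (g + 1) * τ) {k * τ}
      = ENNReal.ofReal ((1 - p) ^ (k - 1) * p) := by
  have hset : {g | (g + 1) * τ ∈ ({k * τ} : Set ℕ)} = {k - 1} := by
    ext g
    simp only [Set.mem_singleton_iff, Set.mem_ofPred_eq, Nat.mul_left_inj hτ]
    omega
  rw [map_geometricMeasure_apply, hset, geometricMeasure_singleton hp]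

theorem map_geometricMeasure_setOf_mul (τ : ℕ) :
    (geometricMeasure p).map (fun g => (g + 1) * τ) {x | ∃ k, 1 ≤ k ∧ x = k * τ} = 1 := by
  have hset : {g | (g + 1) * τ ∈ {x | ∃ k, 1 ≤ k ∧ x = k * τ}} = Set.univ :=
    Set.eq_univ_of_forall fun g => ⟨g + 1, Nat.le_add_left 1 g, rfl⟩
  rw [map_geometricMeasure_apply, hset, measure_univ]

end GeometricMultiples

section Walk

/-- One step of the chain driven by the coins `b`, on pairs of a state and the number of coins used
so far: from state `τ` the next coin sends the chain to `0` (heads) or to `1` (tails). -/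
def failStep (τ : ℕ) (b : ℕ → Bool) (xm : ℕ × ℕ) : ℕ × ℕ :=
  if xm.1 < τ then (max xm.1 1 + 1, xm.2) else (if b xm.2 then 0 else 1, xm.2 + 1)

def walk (τ s₀ : ℕ) (b : ℕ → Bool) (k : ℕ) : ℕ × ℕ := (failStep τ b)^[k] (s₀, 0)

/-- The number of steps from state `x` to state `τ`. -/
def hitTime (τ x : ℕ) : ℕ := if x ≤ 1 then τ - 1 else τ - x

variable {τ s₀ : ℕ} {b b' : ℕ → Bool}

theorem walk_zero : walk τ s₀ b 0 = (s₀, 0) := rfl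

theorem walk_succ (k : ℕ) : walk τ s₀ b (k + 1) = failStep τ b (walk τ s₀ b k) :=
  Function.iterate_succ_apply' _ _ _

theorem walk_snd_succ (k : ℕ) :
    (walk τ s₀ b (k + 1)).2 = (walk τ s₀ b k).2 + if (walk τ s₀ b k).1 < τ then 0 else 1 := by
  rw [walk_succ, failStep]
  split_ifs <;> rfl

theorem walk_snd_mono : Monotone fun k => (walk τ s₀ b k).2 :=
  monotone_nat_of_le_succ fun k => by rw [walk_snd_succ]; exact Nat.le_add_right _ _

theorem walk_fst_le (hτ : 2 ≤ τ) (hs₀ : s₀ ≤ τ) (k : ℕ) : (walk τ s₀ b k).1 ≤ τ := by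
  induction k with
  | zero => exact hs₀
  | succ k ih =>
    rw [walk_succ, failStep]
    split_ifs <;> dsimp only <;> omega

theorem walk_invariant (hτ : 2 ≤ τ) (hs₀ : s₀ ≤ τ) (k : ℕ) :
    k + hitTime τ (walk τ s₀ b k).1 = hitTime τ s₀ + (walk τ s₀ b k).2 * τ := by
  induction k with
  | zero => simp [walk_zero]
  | succ k ih =>
    have hle := walk_fst_le (b := b) hτ hs₀ k
    have hsucc := add_one_mul (walk τ s₀ b k).2 τ
    rw [walk_succ, failStep]
    split_ifs with hlt hcoin <;> dsimp only <;> simp only [hitTime] at ih ⊢ <;>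
      split_ifs at ih ⊢ <;> omega

theorem walk_hitTime_add_mul (hτ : 2 ≤ τ) (hs₀ : s₀ ≤ τ) (m : ℕ) :
    walk τ s₀ b (hitTime τ s₀ + m * τ) = (τ, m) := by
  have hinv := walk_invariant (b := b) hτ hs₀ (hitTime τ s₀ + m * τ)
  have hle := walk_fst_le (b := b) hτ hs₀ (hitTime τ s₀ + m * τ)
  generalize walk τ s₀ b (hitTime τ s₀ + m * τ) = xm at hinv hle ⊢
  obtain ⟨x, m'⟩ := xm
  dsimp only at hinv hle
  have hlt : hitTime τ x < τ := by unfold hitTime; split_ifs <;> omega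
  obtain rfl : m' = m := by
    have h1 : m' * τ < (m + 1) * τ := by rw [add_mul, one_mul]; omega
    have h2 : m * τ ≤ m' * τ := by omega
    exact le_antisymm (Nat.lt_succ_iff.1 (Nat.lt_of_mul_lt_mul_right h1))
      (Nat.le_of_mul_le_mul_right h2 (by omega))
  have hx : x = τ := by unfold hitTime at hinv; split_ifs at hinv <;> omega
  rw [hx]

theorem walk_eq_of_eq_on (k : ℕ) (h : ∀ m < (walk τ s₀ b k).2, b m = b' m) :
    walk τ s₀ b k = walk τ s₀ b' k := by
  induction k with
  | zero => rfl
  | succ k ih =>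
    have hmono := walk_snd_mono (τ := τ) (s₀ := s₀) (b := b) (Nat.le_succ k)
    rw [walk_succ, walk_succ, ← ih fun m hm => h m (lt_of_lt_of_le hm hmono)]
    rw [walk_snd_succ] at h
    by_cases hlt : (walk τ s₀ b k).1 < τ
    · simp [failStep, hlt]
    · simp [failStep, hlt, h (walk τ s₀ b k).2 (by simp [hlt])]

theorem count_walk_fst_eq_zero (k : ℕ) :
    Nat.count (fun i => (walk τ s₀ b i).1 = 0) (k + 1)
      = (if s₀ = 0 then 1 else 0) + Nat.count (b · = true) (walk τ s₀ b k).2 := by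
  induction k with
  | zero => by_cases h : s₀ = 0 <;> simp [walk_zero, Nat.count_succ, h]
  | succ k ih =>
    rw [Nat.count_succ, ih, walk_succ, failStep]
    split_ifs <;> simp_all [Nat.count_succ, add_assoc]

theorem walk_hitTime_add_mul_add_one (hτ : 2 ≤ τ) (hs₀ : s₀ ≤ τ) (m : ℕ) :
    walk τ s₀ b (hitTime τ s₀ + m * τ + 1) = (if b m then 0 else 1, m + 1) := by
  rw [walk_succ, walk_hitTime_add_mul hτ hs₀, failStep, if_neg (lt_irrefl τ)]

theorem eq_hitTime_add_mul_of_walk_fst_eq (hτ : 2 ≤ τ) (hs₀ : s₀ ≤ τ) {k : ℕ}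
    (hk : (walk τ s₀ b k).1 = τ) : k = hitTime τ s₀ + (walk τ s₀ b k).2 * τ := by
  have := walk_invariant (b := b) hτ hs₀ k
  rwa [hk, hitTime, if_neg (by omega), Nat.sub_self, add_zero] at this

section Visits

variable (hτ : 2 ≤ τ) (hs₀ : s₀ ≤ τ) (hb : {m | b m = true}.Infinite)
include hτ hs₀ hb

theorem infinite_walk_fst_eq_zero : {k | (walk τ s₀ b k).1 = 0}.Infinite := by
  have hinj : Function.Injective fun m => hitTime τ s₀ + m * τ + 1 := fun m m' h => by
    simpa [show τ ≠ 0 by omega] using h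
  refine (hb.image hinj.injOn).mono ?_
  rintro _ ⟨m, hm, rfl⟩
  simp [walk_hitTime_add_mul_add_one hτ hs₀, show b m = true from hm]

theorem nth_walk_fst_eq_zero (i : ℕ) :
    Nat.nth (fun k => (walk τ s₀ b k).1 = 0) ((if s₀ = 0 then 1 else 0) + i)
      = hitTime τ s₀ + Nat.nth (b · = true) i * τ + 1 := by
  set m := Nat.nth (b · = true) i
  have hzero : (walk τ s₀ b (hitTime τ s₀ + m * τ + 1)).1 = 0 := by
    simp [walk_hitTime_add_mul_add_one hτ hs₀, m, Nat.nth_mem_of_infinite hb i]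
  have hcount := count_walk_fst_eq_zero (τ := τ) (s₀ := s₀) (b := b) (hitTime τ s₀ + m * τ)
  rw [walk_hitTime_add_mul hτ hs₀, Nat.count_nth_of_infinite hb] at hcount
  rw [← hcount]
  exact Nat.nth_count hzero

/-- The shift `if s₀ = 0 then 0 else 1` accounts for the visit at time zero of a chain started
in `0`. -/
theorem nth_walk_fst_eq_zero_add (j : ℕ) :
    Nat.nth (fun k => (walk τ s₀ b k).1 = 0) j + τ
      = hitTime τ s₀ + 1 + headEnd b ((if s₀ = 0 then 0 else 1) + j) * τ := by
  by_cases h0 : s₀ = 0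
  · subst h0
    have hT : hitTime τ 0 = τ - 1 := if_pos (Nat.zero_le 1)
    cases j with
    | zero =>
      rw [Nat.nth_zero_of_zero (p := fun k => (walk τ 0 b k).1 = 0) rfl]
      simp only [hT, if_true, add_zero, headEnd, zero_mul]
      omega
    | succ i =>
      have h := nth_walk_fst_eq_zero hτ hs₀ hb i
      rw [if_pos rfl, add_comm 1 i] at h
      rw [h, if_pos rfl, zero_add, headEnd, hT, add_one_mul]
      omega
  · have h := nth_walk_fst_eq_zero hτ hs₀ hb j
    rw [if_neg h0, zero_add] at h
    rw [h, if_neg h0, add_comm 1 j, headEnd, add_one_mul]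
    omega

theorem nth_walk_fst_eq_zero_succ_sub (j : ℕ) :
    Nat.nth (fun k => (walk τ s₀ b k).1 = 0) (j + 1) - Nat.nth (fun k => (walk τ s₀ b k).1 = 0) j
      = (gap b ((if s₀ = 0 then 0 else 1) + j) + 1) * τ := by
  have h1 := nth_walk_fst_eq_zero_add hτ hs₀ hb (j + 1)
  have h2 := nth_walk_fst_eq_zero_add hτ hs₀ hb j
  set w := (if s₀ = 0 then 0 else 1) + j
  have hexp : (headEnd b w + gap b w + 1) * τ = headEnd b w * τ + (gap b w + 1) * τ := by ring
  rw [← add_assoc, headEnd_succ hb, hexp] at h1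
  omega

end Visits

end Walk

section FailureChain

/-- The transition matrix of the statement, the paper's state `v` being `v - 1 : Fin (τ + 1)`. -/
def failMatrix (τ : ℕ) (p : ℝ) (i j : Fin (τ + 1)) : ℝ :=
  if (i : ℕ) ≤ 1 then (if (j : ℕ) = 2 then 1 else 0)
  else if (i : ℕ) < τ then (if (j : ℕ) = (i : ℕ) + 1 then 1 else 0)
  else (if (j : ℕ) = 0 then p else if (j : ℕ) = 1 then 1 - p else 0)

variable {τ : ℕ} {p : unitInterval}

theorem ofReal_failMatrix_failStep (hτ : 2 ≤ τ) (b : ℕ → Bool) (m : ℕ) {i j : Fin (τ + 1)}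
    (hj : (j : ℕ) = (failStep τ b (i, m)).1) :
    ENNReal.ofReal (failMatrix τ p i j) = if (i : ℕ) < τ then 1 else coinWeight p (b m) := by
  have hi := i.is_le
  unfold failMatrix failStep at *
  unfold coinWeight
  split_ifs at hj ⊢ <;> simp_all <;> omega

theorem failStep_of_failMatrix_pos {i j : Fin (τ + 1)} (h : 0 < failMatrix τ p i j)
    (b : ℕ → Bool) (m : ℕ) (hcoin : τ ≤ (i : ℕ) → b m = decide ((j : ℕ) = 0)) :
    (j : ℕ) = (failStep τ b (i, m)).1 := by
  unfold failMatrix at h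
  unfold failStep
  split_ifs at h ⊢ <;> simp_all <;> omega

theorem prod_ofReal_failMatrix_walk (hτ : 2 ≤ τ) (s₀ : ℕ) (b : ℕ → Bool) {c : ℕ → Fin (τ + 1)}
    (hc : ∀ i, (c i : ℕ) = (walk τ s₀ b i).1) (k : ℕ) :
    ∏ i ∈ range k, ENNReal.ofReal (failMatrix τ p (c i) (c (i + 1)))
      = ∏ m ∈ range (walk τ s₀ b k).2, coinWeight p (b m) := by
  induction k with
  | zero => rfl
  | succ k ih =>
    have hstep := ofReal_failMatrix_failStep (p := p) hτ b (walk τ s₀ b k).2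
      (i := c k) (j := c (k + 1)) (by rw [hc, hc, walk_succ])
    rw [prod_range_succ, ih, hstep, walk_snd_succ, hc]
    split_ifs
    · rw [mul_one, add_zero]
    · rw [prod_range_succ]

variable {Ω : Type*}

/-- The coin read off the chain at its `m`-th passage through state `τ`: heads if it moves to
`0`. -/
def coinSeq (τ s₀ : ℕ) (s : ℕ → Ω → Fin (τ + 1)) (ω : Ω) (m : ℕ) : Bool :=
  decide ((s (hitTime τ s₀ + m * τ + 1) ω : ℕ) = 0)

variable {s : ℕ → Ω → Fin (τ + 1)} {s₀ : Fin (τ + 1)}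

theorem val_eq_walk_coinSeq (hτ : 2 ≤ τ) {ω : Ω} (h0 : s 0 ω = s₀)
    (hpos : ∀ k, 0 < failMatrix τ p (s k ω) (s (k + 1) ω)) (k : ℕ) :
    (s k ω : ℕ) = (walk τ s₀ (coinSeq τ s₀ s ω) k).1 := by
  induction k with
  | zero => rw [h0]; rfl
  | succ k ih =>
    set m := (walk τ s₀ (coinSeq τ s₀ s ω) k).2
    have hcoin : τ ≤ (s k ω : ℕ) → coinSeq τ s₀ s ω m = decide ((s (k + 1) ω : ℕ) = 0) :=
      fun hτk => by
        have hk := eq_hitTime_add_mul_of_walk_fst_eq hτ s₀.is_le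
          (le_antisymm (walk_fst_le hτ s₀.is_le k) (ih ▸ hτk))
        rw [coinSeq, ← hk]
    rw [failStep_of_failMatrix_pos (hpos k) _ m hcoin, ih, walk_succ]

variable [MeasurableSpace Ω] {μ : Measure Ω}

theorem isBernoulliSeq_coinSeq [IsProbabilityMeasure μ] (hτ : 2 ≤ τ) (hs0 : ∀ ω, s 0 ω = s₀)
    (hM : IsMarkov μ s (failMatrix τ p)) : IsBernoulliSeq μ p (coinSeq τ s₀ s) := by
  refine isBernoulliSeq_of_le fun L v => ?_
  set K := hitTime τ s₀ + L * τ
  let c (i : ℕ) : Fin (τ + 1) :=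
    ⟨(walk τ s₀ v i).1, Nat.lt_succ_of_le (walk_fst_le hτ s₀.is_le i)⟩
  have hbad : μ {ω | ¬ ∀ k, 0 < failMatrix τ p (s k ω) (s (k + 1) ω)} = 0 :=
    ae_iff.1 hM.ae_forall_transition_pos
  -- on good trajectories, coins agreeing with `v` force the path of `v` up to time `K`
  have hsub : {ω | ∀ m < L, coinSeq τ s₀ s ω m = v m}
      ⊆ {ω | ¬ ∀ k, 0 < failMatrix τ p (s k ω) (s (k + 1) ω)} ∪ {ω | ∀ i ≤ K, s i ω = c i} := by
    intro ω hω
    by_cases hpos : ∀ k, 0 < failMatrix τ p (s k ω) (s (k + 1) ω)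
    · refine Or.inr fun i hi => Fin.ext ?_
      rw [val_eq_walk_coinSeq hτ (hs0 ω) hpos i]
      refine congrArg Prod.fst (walk_eq_of_eq_on i fun m hm => (hω m ?_).symm).symm
      calc m < (walk τ s₀ v i).2 := hm
        _ ≤ (walk τ s₀ v K).2 := walk_snd_mono hi
        _ = L := by rw [walk_hitTime_add_mul hτ s₀.is_le]
    · exact Or.inl hpos
  calc μ {ω | ∀ m < L, coinSeq τ s₀ s ω m = v m} ≤ μ {ω | ∀ i ≤ K, s i ω = c i} :=
        (measure_mono hsub).trans ((measure_union_le _ _).trans_eq (by rw [hbad, zero_add]))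
    _ ≤ μ {ω | s 0 ω = c 0} * ∏ i ∈ range K, ENNReal.ofReal (failMatrix τ p (c i) (c (i + 1))) :=
        hM.measure_cylinder_le c K
    _ ≤ ∏ i ∈ range K, ENNReal.ofReal (failMatrix τ p (c i) (c (i + 1))) :=
        mul_le_of_le_one_left' prob_le_one
    _ = _ := by
        rw [prod_ofReal_failMatrix_walk hτ s₀ v (fun _ => rfl), walk_hitTime_add_mul hτ s₀.is_le]

theorem ae_observation_increments [IsProbabilityMeasure μ] (hτ : 2 ≤ τ) (hp : p ≠ 0)
    (hs0 : ∀ ω, s 0 ω = s₀) (hM : IsMarkov μ s (failMatrix τ p)) :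
    ∀ᵐ ω ∂μ, {k | (s k ω : ℕ) = 0}.Infinite ∧ ∀ i,
      Nat.nth (fun k => (s k ω : ℕ) = 0) (i + 1) - Nat.nth (fun k => (s k ω : ℕ) = 0) i
        = (gap (coinSeq τ s₀ s ω) ((if (s₀ : ℕ) = 0 then 0 else 1) + i) + 1) * τ := by
  filter_upwards [hM.ae_forall_transition_pos,
    (isBernoulliSeq_coinSeq hτ hs0 hM).ae_infinite_heads hp] with ω hpos hinf
  simp_rw [val_eq_walk_coinSeq hτ (hs0 ω) hpos]
  exact ⟨infinite_walk_fst_eq_zero hτ s₀.is_le hinf,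
    nth_walk_fst_eq_zero_succ_sub hτ s₀.is_le hinf⟩

theorem measure_forall_observation_increment_mem [IsProbabilityMeasure μ] (hτ : 2 ≤ τ)
    (hp : p ≠ 0) (hs0 : ∀ ω, s 0 ω = s₀) (hM : IsMarkov μ s (failMatrix τ p)) {t : ℕ → Ω → ℕ}
    (ht : ∀ i ω, t i ω = Nat.nth (fun k => (s k ω : ℕ) = 0) i) (n : ℕ) (B : ℕ → Set ℕ) :
    μ {ω | ∀ i < n, t (i + 1) ω - t i ω ∈ B i}
      = ∏ i ∈ range n, (geometricMeasure p).map (fun g => (g + 1) * τ) (B i) := by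
  simp_rw [map_geometricMeasure_apply]
  rw [← (isBernoulliSeq_coinSeq hτ hs0 hM).measure_forall_gap_add_mem hp
    (if (s₀ : ℕ) = 0 then 0 else 1)]
  refine measure_congr (Filter.eventuallyEq_set.2
    ((ae_observation_increments hτ hp hs0 hM).mono fun ω hω => ?_))
  simp only [Set.mem_ofPred_eq, ht, hω.2]

end FailureChain

/-- periodic observations with failures. For the Markov chain `s` on
`{1,…,τ+1}` (state `v` encoded as `v - 1 : Fin (τ+1)`) with transitions `1 → 3`, `2 → 3`,
`j → j+1` for `3 ≤ j ≤ τ`, and `τ+1 → 1` w.p. `p`, `τ+1 → 2` w.p. `1−p`, and `Λ = {1}`,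
the set of observation times is a.s. infinite and the increments `t_{i+1} − t_i` of its
increasing enumeration (`Nat.nth`) are i.i.d. with `ℙ(t_{i+1} − t_i = kτ) = (1−p)^{k−1} p`
for every `k ≥ 1`; in particular each increment lies in `{τ, 2τ, …}` a.s. -/
theorem periodic_observation_with_failures_renewal
    (τ : ℕ) (hτ : 2 ≤ τ) (p : ℝ) (hp : p ∈ Set.Ioc (0:ℝ) 1)
    (P : Fin (τ+1) → Fin (τ+1) → ℝ)
    (hP : ∀ i j : Fin (τ+1), P i j =
      if (i : ℕ) ≤ 1 then (if (j : ℕ) = 2 then 1 else 0)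
      else if (i : ℕ) < τ then (if (j : ℕ) = (i : ℕ) + 1 then 1 else 0)
      else (if (j : ℕ) = 0 then p else if (j : ℕ) = 1 then 1 - p else 0))
    (Ω : Type) [MeasurableSpace Ω] (μ : Measure Ω) [IsProbabilityMeasure μ]
    (s : ℕ → Ω → Fin (τ+1)) (s₀ : Fin (τ+1)) (hs0 : ∀ ω, s 0 ω = s₀)
    (hM : IsMarkov μ s P)
    (t : ℕ → Ω → ℕ)
    (ht : ∀ (i : ℕ) (ω : Ω), t i ω = Nat.nth (fun k => (s k ω : ℕ) = 0) i) :
    μ {ω | {k : ℕ | (s k ω : ℕ) = 0}.Infinite} = 1 ∧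
    iIndepFun (m := fun _ : ℕ => (inferInstance : MeasurableSpace ℕ))
      (fun i ω => t (i+1) ω - t i ω) μ ∧
    (∀ i : ℕ, ∀ k : ℕ, 1 ≤ k →
      μ {ω | t (i+1) ω - t i ω = k * τ} = ENNReal.ofReal ((1 - p)^(k-1) * p)) ∧
    (∀ i : ℕ, μ {ω | ∃ k : ℕ, 1 ≤ k ∧ t (i+1) ω - t i ω = k * τ} = 1) := by
  set q : unitInterval := ⟨p, hp.1.le, hp.2⟩
  have hq : q ≠ 0 := fun h => hp.1.ne' (congrArg Subtype.val h)
  obtain rfl : P = failMatrix τ q := funext fun i => funext (hP i)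
  have hlaw (n : ℕ) (B : ℕ → Set ℕ) (_ : ∀ i, MeasurableSet (B i)) :=
    measure_forall_observation_increment_mem hτ hq hs0 hM ht n B
  have : IsProbabilityMeasure ((geometricMeasure q).map fun g => (g + 1) * τ) :=
    Measure.isProbabilityMeasure_map .of_discrete
  have hmarg := measure_preimage_eq_of_measure_forall_mem_eq_prod hlaw
  refine ⟨?_, iIndepFun_of_measure_forall_mem_eq_prod hlaw, fun i k hk => ?_, fun i => ?_⟩
  · exact (measure_congr (Filter.eventuallyEq_set.2 ((ae_observation_increments hτ hq hs0 hM).mono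
      fun ω hω => iff_of_true hω.1 trivial))).trans measure_univ
  · exact (hmarg i .of_discrete).trans (map_geometricMeasure_singleton_mul hq (by omega) hk)
  · exact (hmarg i .of_discrete).trans (map_geometricMeasure_setOf_mul τ)
end
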